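/- For any real number α and any integers r, t ≥ 2, the general Randić index of the Sierpiński graph S(K_{1,r},t) built from the star K_{1,r} satisfies R_α(S(K_{1,r},t)) = (r+1)^α·((r+1)^{t−1}(r−1) + 1) + 2^α·r^{α+1} + (2(r+1))^α·(2(r+1)^{t−1} − r − 2). -/

import Mathlib

/-!
Every edge of `S(K_{1,r}, t)` joins a word ending in a leaf to a word ending in the centre, so
`R_α` is a sum, over the leaf-ending words `w`, of the terms of the edges at `w`. Such a `w` is
adjacent to the word obtained by changing its last letter to the centre, and to at most one other
word (when `w = p c x ⋯ x`), which ends in the centre and is not constant, hence has degree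
`r + 1`. So `deg w ∈ {1, 2}`, and only the number of leaf-ending words of degree `2` is needed:
the handshake identity across the bipartition gives it as `(r + 1) ^ (t - 1) - 1`, from the
degrees of the centre-ending words (`r + 1`, except `r` for the constant word).
-/

open Finset

/-- The generalized Sierpiński graph `S(G,t)` on words of length `t` over the vertex set. -/
def sierpinskiGraph {V : Type*} (G : SimpleGraph V) (t : ℕ) :
    SimpleGraph (Fin t → V) where
  Adj u v := ∃ i : Fin t, (∀ j, j < i → u j = v j) ∧ u i ≠ v i ∧ G.Adj (u i) (v i) ∧
      ∀ j, i < j → u j = v i ∧ v j = u i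
  symm := by
    constructor
    rintro u v ⟨i, h1, h2, h3, h4⟩
    exact ⟨i, fun j hj => (h1 j hj).symm, fun h => h2 h.symm, h3.symm,
      fun j hj => ⟨(h4 j hj).2, (h4 j hj).1⟩⟩
  loopless := by
    constructor
    rintro u ⟨i, _, h2, _⟩
    exact h2 rfl

instance {V : Type*} [Fintype V] [DecidableEq V] (G : SimpleGraph V) [DecidableRel G.Adj]
    (t : ℕ) : DecidableRel (sierpinskiGraph G t).Adj := fun u v =>
  inferInstanceAs (Decidable (∃ i : Fin t, (∀ j, j < i → u j = v j) ∧ u i ≠ v i ∧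
    G.Adj (u i) (v i) ∧ ∀ j, i < j → u j = v i ∧ v j = u i))

/-- The general Randić index `R_α`. -/
noncomputable def randic {V : Type*} [Fintype V] (G : SimpleGraph V) (α : ℝ) : ℝ := by
  classical
  exact ∑ e ∈ G.edgeFinset,
    Sym2.lift ⟨fun u v => ((G.degree u : ℝ) * (G.degree v : ℝ)) ^ α,
      fun u v => by dsimp only; rw [mul_comm]⟩ e

/-- `τ(x,y)`: the number of triangles containing the adjacent vertices `x` and `y`. -/
def tau {V : Type*} [Fintype V] [DecidableEq V] (G : SimpleGraph V) [DecidableRel G.Adj]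
    (x y : V) : ℕ := (G.neighborFinset x ∩ G.neighborFinset y).card

lemma tau_comm {V : Type*} [Fintype V] [DecidableEq V] (G : SimpleGraph V) [DecidableRel G.Adj]
    (x y : V) : tau G x y = tau G y x := by
  simp [tau, Finset.inter_comm]

/-- `ψ(t) = 1 + n + ⋯ + n^{t-1}`. -/
def psi (n t : ℕ) : ℕ := ∑ i ∈ Finset.range t, n ^ i

/-- `τ(G)`: the number of triangles of `G`. -/
noncomputable def triangleCount {V : Type*} [Fintype V] (G : SimpleGraph V) : ℕ := by
  classical exact (G.cliqueFinset 3).card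

instance {A B : Type*} : DecidableRel (completeBipartiteGraph A B).Adj := fun a b =>
  inferInstanceAs (Decidable (a.isLeft ∧ b.isRight ∨ a.isRight ∧ b.isLeft))

namespace SimpleGraph

variable {W : Type*} [Fintype W] {H : SimpleGraph W} [DecidableRel H.Adj]
  {s t : Finset W}

theorem IsBipartiteWith.sum_edgeFinset_eq {M : Type*} [AddCommMonoid M]
    (h : H.IsBipartiteWith s t) (f : Sym2 W → M) :
    ∑ e ∈ H.edgeFinset, f e = ∑ v ∈ s, ∑ z ∈ H.neighborFinset v, f s(v, z) := by
  rw [sum_sigma']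
  symm
  refine sum_bij (fun p _ => s(p.1, p.2)) (fun p hp => ?_) (fun p hp p' hp' he => ?_)
    (fun e he => ?_) (fun _ _ => rfl)
  · exact mem_edgeFinset.mpr ((mem_neighborFinset _ _ _).mp (mem_sigma.mp hp).2)
  · obtain ⟨v, z⟩ := p
    obtain ⟨v', z'⟩ := p'
    obtain ⟨hv, hz⟩ := mem_sigma.mp hp
    obtain ⟨hv', hz'⟩ := mem_sigma.mp hp'
    rcases Sym2.eq_iff.mp he with ⟨rfl, rfl⟩ | ⟨rfl, rfl⟩
    · rfl
    · have := h.mem_of_mem_adj (mem_coe.mpr hv') ((mem_neighborFinset _ _ _).mp hz')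
      exact absurd (mem_coe.mp this) (Finset.disjoint_left.mp (disjoint_coe.mp h.disjoint) hv)
  · induction e using Sym2.ind with
    | _ u z =>
      have hadj : H.Adj u z := mem_edgeFinset.mp he
      rcases h.mem_of_adj hadj with ⟨hu, -⟩ | ⟨-, hz⟩
      · exact ⟨⟨u, z⟩, mem_sigma.mpr ⟨hu, (mem_neighborFinset _ _ _).mpr hadj⟩, rfl⟩
      · exact ⟨⟨z, u⟩, mem_sigma.mpr ⟨hz, (mem_neighborFinset _ _ _).mpr hadj.symm⟩,
          Sym2.eq_swap⟩

theorem randic_eq_sum_of_isBipartiteWith (h : H.IsBipartiteWith s t) (α : ℝ) :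
    randic H α = ∑ v ∈ s, ∑ z ∈ H.neighborFinset v, ((H.degree v : ℝ) * H.degree z) ^ α := by
  calc randic H α = ∑ e ∈ H.edgeFinset,
        Sym2.lift ⟨fun u v => ((H.degree u : ℝ) * H.degree v) ^ α,
          fun u v => by dsimp only; rw [mul_comm]⟩ e := by
        unfold randic
        congr!
    _ = _ := h.sum_edgeFinset_eq _

end SimpleGraph

namespace sierpinskiGraph

variable {V : Type*} {G : SimpleGraph V}

def move {t : ℕ} (w : Fin t → V) (i : Fin t) (b : V) : Fin t → V :=
  fun j => if j < i then w j else if j = i then b else w i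

section move

variable {t : ℕ} {w : Fin t → V} {i j : Fin t} {b : V}

lemma move_of_lt (h : j < i) : move w i b j = w j := by simp [move, h]

@[simp] lemma move_self : move w i b i = b := by simp [move]

lemma move_of_gt (h : i < j) : move w i b j = w i := by
  simp [move, h.ne', not_lt_of_gt h]

lemma move_last {n : ℕ} (w : Fin (n + 1) → V) (b : V) :
    move w (Fin.last n) b = Function.update w (Fin.last n) b := by
  funext j
  rcases (Fin.le_last j).lt_or_eq with h | rfl
  · rw [move_of_lt h, Function.update_of_ne h.ne]
  · simp

lemma move_injective {i' : Fin t} {b' : V} (hb : b ≠ w i) (hb' : b' ≠ w i')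
    (h : move w i b = move w i' b') : i = i' ∧ b = b' := by
  have hi : i = i' := by
    rcases lt_trichotomy i i' with hlt | heq | hgt
    · have := congrFun h i
      rw [move_self, move_of_lt hlt] at this
      exact absurd this hb
    · exact heq
    · have := congrFun h i'
      rw [move_self, move_of_lt hgt] at this
      exact absurd this.symm hb'
  subst hi
  exact ⟨rfl, by simpa using congrFun h i⟩

end move

lemma adj_iff {t : ℕ} {w z : Fin t → V} :
    (sierpinskiGraph G t).Adj w z ↔
      ∃ i b, G.Adj (w i) b ∧ (∀ j, i < j → w j = b) ∧ z = move w i b := by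
  constructor
  · rintro ⟨i, hpre, -, hadj, hsuf⟩
    refine ⟨i, z i, hadj, fun j hj => (hsuf j hj).1, funext fun j => ?_⟩
    rcases lt_trichotomy j i with h | rfl | h
    · rw [move_of_lt h, hpre j h]
    · rw [move_self]
    · rw [move_of_gt h, (hsuf j h).2]
  · rintro ⟨i, b, hadj, hsuf, rfl⟩
    exact ⟨i, fun j hj => (move_of_lt hj).symm, by simpa using hadj.ne, by simpa using hadj,
      fun j hj => ⟨by rw [hsuf j hj, move_self], move_of_gt hj⟩⟩

lemma adj_last {n : ℕ} {w z : Fin (n + 1) → V} (h : (sierpinskiGraph G (n + 1)).Adj w z) :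
    G.Adj (w (Fin.last n)) (z (Fin.last n)) := by
  obtain ⟨i, -, -, hadj, hsuf⟩ := h
  rcases (Fin.le_last i).lt_or_eq with hi | rfl
  · rw [(hsuf _ hi).1, (hsuf _ hi).2]
    exact hadj.symm
  · exact hadj

lemma isBipartiteWith {n : ℕ} {s t : Set V} (h : G.IsBipartiteWith s t) :
    (sierpinskiGraph G (n + 1)).IsBipartiteWith
      {w | w (Fin.last n) ∈ s} {w | w (Fin.last n) ∈ t} where
  disjoint := Set.disjoint_left.mpr fun _ hs ht => Set.disjoint_left.mp h.disjoint hs ht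
  mem_of_adj _ _ hadj := h.mem_of_adj (adj_last hadj)

lemma eq_of_adj_last {n : ℕ} {w : Fin (n + 1) → V} {k k' : Fin (n + 1)}
    (hk : G.Adj (w k) (w (Fin.last n)) ∧ ∀ j, k < j → w j = w (Fin.last n))
    (hk' : G.Adj (w k') (w (Fin.last n)) ∧ ∀ j, k' < j → w j = w (Fin.last n)) : k = k' := by
  by_contra hne
  rcases lt_or_gt_of_ne hne with h | h
  · exact (hk.2 k' h ▸ hk'.1).ne rfl
  · exact (hk'.2 k h ▸ hk.1).ne rfl

variable [Fintype V] [DecidableEq V] [DecidableRel G.Adj]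

lemma degree_eq_card {t : ℕ} (w : Fin t → V) :
    (sierpinskiGraph G t).degree w =
      #{q : Fin t × V | G.Adj (w q.1) q.2 ∧ ∀ j, q.1 < j → w j = q.2} := by
  rw [← SimpleGraph.card_neighborFinset_eq_degree]
  symm
  refine Finset.card_bij (fun q _ => move w q.1 q.2) (fun q hq => ?_) (fun q hq q' hq' h => ?_)
    (fun z hz => ?_)
  · simp only [mem_filter, mem_univ, true_and] at hq
    exact (SimpleGraph.mem_neighborFinset _ _ _).mpr (adj_iff.mpr ⟨q.1, q.2, hq.1, hq.2, rfl⟩)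
  · simp only [mem_filter, mem_univ, true_and] at hq hq'
    obtain ⟨h1, h2⟩ := move_injective hq.1.ne' hq'.1.ne' h
    exact Prod.ext h1 h2
  · obtain ⟨i, b, hadj, hsuf, rfl⟩ := adj_iff.mp ((SimpleGraph.mem_neighborFinset _ _ _).mp hz)
    exact ⟨(i, b), mem_filter.mpr ⟨mem_univ _, hadj, hsuf⟩, rfl⟩

/-- `w` has a neighbour in `S(G, n + 1)` that differs from it before the last letter; there is
at most one such neighbour. -/
def HasInnerNeighbor {n : ℕ} (G : SimpleGraph V) (w : Fin (n + 1) → V) : Prop :=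
  ∃ i, G.Adj (w i) (w (Fin.last n)) ∧ ∀ j, i < j → w j = w (Fin.last n)

instance {n : ℕ} (w : Fin (n + 1) → V) : Decidable (HasInnerNeighbor G w) := by
  unfold HasInnerNeighbor
  infer_instance

theorem degree_eq {n : ℕ} (w : Fin (n + 1) → V) :
    (sierpinskiGraph G (n + 1)).degree w =
      G.degree (w (Fin.last n)) + if HasInnerNeighbor G w then 1 else 0 := by
  rw [degree_eq_card, ← card_filter_add_card_filter_not (fun q => q.1 = Fin.last n),
    filter_filter, filter_filter]
  congr 1
  · rw [← SimpleGraph.card_neighborFinset_eq_degree]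
    refine card_nbij' Prod.snd (fun b => (Fin.last n, b)) (fun q hq => ?_) (fun b hb => ?_)
      (fun q hq => Prod.ext (mem_filter.mp hq).2.2.symm rfl) (fun b _ => rfl)
    · obtain ⟨-, ⟨hadj, -⟩, hq⟩ := mem_filter.mp hq
      simpa [← hq] using hadj
    · simpa [(Fin.le_last _).not_gt] using hb
  · split_ifs with h
    · obtain ⟨i, hi⟩ := h
      refine card_eq_one.mpr ⟨(i, w (Fin.last n)), ?_⟩
      ext ⟨k, b⟩
      simp only [mem_filter, mem_univ, true_and, mem_singleton, Prod.mk.injEq]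
      constructor
      · rintro ⟨hk, hlast⟩
        obtain rfl : b = w (Fin.last n) := (hk.2 _ (Fin.lt_last_iff_ne_last.mpr hlast)).symm
        exact ⟨eq_of_adj_last hk hi, rfl⟩
      · rintro ⟨rfl, rfl⟩
        exact ⟨hi, fun hlast => hi.1.ne (congrArg w hlast)⟩
    · refine card_eq_zero.mpr (filter_eq_empty_iff.mpr fun ⟨k, b⟩ _ ⟨hk, hlast⟩ => h ?_)
      obtain rfl : b = w (Fin.last n) := (hk.2 _ (Fin.lt_last_iff_ne_last.mpr hlast)).symm
      exact ⟨k, hk⟩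

end sierpinskiGraph

section WordCount

variable {V : Type*} [Fintype V] [DecidableEq V] {n : ℕ}

theorem card_filter_last_eq (a : V) :
    #{w : Fin (n + 1) → V | w (Fin.last n) = a} = Fintype.card V ^ n := by
  simpa using Fintype.card_filter_piFinset_const_eq_of_mem (univ : Finset V) (Fin.last n)
    (mem_univ a)

theorem card_filter_last_ne_add (a : V) :
    #{w : Fin (n + 1) → V | w (Fin.last n) ≠ a} + Fintype.card V ^ n =
      Fintype.card V ^ (n + 1) := by
  simpa [card_filter_last_eq] using
    card_filter_add_card_filter_not (s := univ) fun w : Fin (n + 1) → V => w (Fin.last n) ≠ a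

theorem card_filter_update_last_eq_const (a : V) :
    #{w : Fin (n + 1) → V | w (Fin.last n) ≠ a ∧
      Function.update w (Fin.last n) a = fun _ => a} = Fintype.card V - 1 := by
  rw [← card_univ, ← card_erase_of_mem (mem_univ a), ← filter_ne' univ a]
  refine card_nbij' (fun w => w (Fin.last n)) (Function.update (fun _ => a) (Fin.last n))
    (fun w hw => ?_) (fun b hb => ?_) (fun w hw => ?_) (fun b _ => Function.update_self ..)
  · simpa using (mem_filter.mp hw).2.1
  · simpa using hb
  · obtain ⟨-, -, hc⟩ := mem_filter.mp hw
    simp only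
    rw [← hc, Function.update_idem, Function.update_eq_self]

end WordCount

abbrev starGraph (r : ℕ) : SimpleGraph (Fin 1 ⊕ Fin r) := completeBipartiteGraph (Fin 1) (Fin r)

namespace starGraph

variable {r : ℕ}

lemma adj_iff {a b : Fin 1 ⊕ Fin r} :
    (starGraph r).Adj a b ↔ (a = Sum.inl 0 ↔ b ≠ Sum.inl 0) := by
  rcases a with a | a <;> rcases b with b | b <;> simp [Fin.fin_one_eq_zero]

lemma degree_center : (starGraph r).degree (Sum.inl 0) = r := by
  rw [← SimpleGraph.card_neighborFinset_eq_degree]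
  have : (starGraph r).neighborFinset (Sum.inl 0) = univ.map ⟨Sum.inr, Sum.inr_injective⟩ := by
    ext (x | x) <;> simp
  simp [this]

lemma degree_of_ne_center {a : Fin 1 ⊕ Fin r} (ha : a ≠ Sum.inl 0) :
    (starGraph r).degree a = 1 := by
  rw [← SimpleGraph.card_neighborFinset_eq_degree, card_eq_one]
  refine ⟨Sum.inl 0, ?_⟩
  ext b
  rw [SimpleGraph.mem_neighborFinset, adj_iff, mem_singleton]
  tauto

lemma isBipartiteWith :
    (starGraph r).IsBipartiteWith {a | a ≠ Sum.inl 0} {Sum.inl 0} where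
  disjoint := by simp
  mem_of_adj a b h := by
    rw [adj_iff] at h
    by_cases ha : a = Sum.inl 0 <;> simp_all

end starGraph

namespace sierpinskiGraph

variable {r n : ℕ}

theorem degree_star_of_last_eq_center {w : Fin (n + 1) → Fin 1 ⊕ Fin r}
    (hw : w (Fin.last n) = Sum.inl 0) :
    (sierpinskiGraph (starGraph r) (n + 1)).degree w =
      r + if w = fun _ => Sum.inl 0 then 0 else 1 := by
  rw [degree_eq, hw, starGraph.degree_center]
  congr 1
  by_cases hc : w = fun _ => Sum.inl 0
  · rw [if_pos hc, if_neg]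
    rintro ⟨i, hadj, -⟩
    simp [hc] at hadj
  · rw [if_neg hc, if_pos]
    obtain ⟨i, hi⟩ : ∃ i, w i ≠ Sum.inl 0 := by
      by_contra! h
      exact hc (funext h)
    obtain ⟨m, hm, hmax⟩ :=
      exists_max_image {j | w j ≠ Sum.inl 0} id ⟨i, mem_filter.mpr ⟨mem_univ _, hi⟩⟩
    refine ⟨m, ?_, fun j hj => ?_⟩
    · rw [hw, starGraph.adj_iff]
      simpa using (mem_filter.mp hm).2
    · by_contra hj'
      exact (hmax j (mem_filter.mpr ⟨mem_univ _, hw ▸ hj'⟩)).not_gt hj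

theorem degree_star_of_last_ne_center {w : Fin (n + 1) → Fin 1 ⊕ Fin r}
    (hw : w (Fin.last n) ≠ Sum.inl 0) :
    (sierpinskiGraph (starGraph r) (n + 1)).degree w =
      1 + if HasInnerNeighbor (starGraph r) w then 1 else 0 := by
  rw [degree_eq, starGraph.degree_of_ne_center hw]

theorem hasInnerNeighbor_star_of_update_last_eq_const {w : Fin (n + 2) → Fin 1 ⊕ Fin r}
    (hw : w (Fin.last (n + 1)) ≠ Sum.inl 0)
    (hc : Function.update w (Fin.last (n + 1)) (Sum.inl 0) = fun _ => Sum.inl 0) :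
    HasInnerNeighbor (starGraph r) w := by
  refine ⟨(Fin.last n).castSucc, ?_, fun j hj => ?_⟩
  · have := congrFun hc (Fin.last n).castSucc
    rw [Function.update_of_ne (Fin.castSucc_lt_last _).ne] at this
    rw [this, starGraph.adj_iff]
    simpa using hw
  · rw [Fin.castSucc_lt_iff_succ_le, Fin.succ_last] at hj
    rw [le_antisymm (Fin.le_last j) hj]

theorem degree_star_of_adj {w z : Fin (n + 1) → Fin 1 ⊕ Fin r}
    (hw : w (Fin.last n) ≠ Sum.inl 0) (hadj : (sierpinskiGraph (starGraph r) (n + 1)).Adj w z)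
    (hz : z ≠ Function.update w (Fin.last n) (Sum.inl 0)) :
    (sierpinskiGraph (starGraph r) (n + 1)).degree z = r + 1 := by
  obtain ⟨i, b, hib, hsuf, rfl⟩ := adj_iff.mp hadj
  rw [starGraph.adj_iff] at hib
  rcases (Fin.le_last i).lt_or_eq with hi | rfl
  · obtain rfl : b = w (Fin.last n) := (hsuf _ hi).symm
    have hwi : w i = Sum.inl 0 := by tauto
    rw [degree_star_of_last_eq_center (by rw [move_of_gt hi, hwi]), if_neg]
    intro h
    exact hw (by simpa using congrFun h i)
  · exact absurd (by rw [move_last, show b = Sum.inl 0 by tauto]) hz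

theorem sum_neighborFinset_star {w : Fin (n + 1) → Fin 1 ⊕ Fin r}
    (hw : w (Fin.last n) ≠ Sum.inl 0) (F : ℕ → ℝ) :
    ∑ z ∈ (sierpinskiGraph (starGraph r) (n + 1)).neighborFinset w,
        F ((sierpinskiGraph (starGraph r) (n + 1)).degree z) =
      F ((sierpinskiGraph (starGraph r) (n + 1)).degree
          (Function.update w (Fin.last n) (Sum.inl 0))) +
        if HasInnerNeighbor (starGraph r) w then F (r + 1) else 0 := by
  have hmem : Function.update w (Fin.last n) (Sum.inl 0) ∈
      (sierpinskiGraph (starGraph r) (n + 1)).neighborFinset w := by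
    refine (SimpleGraph.mem_neighborFinset _ _ _).mpr
      (adj_iff.mpr ⟨Fin.last n, Sum.inl 0, ?_, fun j hj => absurd hj (Fin.le_last j).not_gt,
        (move_last w _).symm⟩)
    rw [starGraph.adj_iff]
    simpa using hw
  rw [← add_sum_erase _ _ hmem]
  congr 1
  rw [sum_congr rfl fun z hz => by
      rw [degree_star_of_adj hw ((SimpleGraph.mem_neighborFinset _ _ _).mp (mem_of_mem_erase hz))
        (ne_of_mem_erase hz)],
    sum_const, card_erase_of_mem hmem, SimpleGraph.card_neighborFinset_eq_degree,
    degree_star_of_last_ne_center hw]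
  split_ifs <;> simp

theorem isBipartiteWith_star : (sierpinskiGraph (starGraph r) (n + 1)).IsBipartiteWith
    ↑({w | w (Fin.last n) ≠ Sum.inl 0} : Finset (Fin (n + 1) → Fin 1 ⊕ Fin r))
    ↑({w | w (Fin.last n) = Sum.inl 0} : Finset (Fin (n + 1) → Fin 1 ⊕ Fin r)) := by
  convert isBipartiteWith (n := n) starGraph.isBipartiteWith using 1 <;> ext w <;> simp

theorem sum_degree_last_eq_center_star :
    ∑ w : Fin (n + 1) → Fin 1 ⊕ Fin r with w (Fin.last n) = Sum.inl 0,
      (sierpinskiGraph (starGraph r) (n + 1)).degree w + 1 = (r + 1) ^ n * (r + 1) := by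
  have hconst : (fun _ => Sum.inl 0) ∈
      ({w | w (Fin.last n) = Sum.inl 0} : Finset (Fin (n + 1) → Fin 1 ⊕ Fin r)) := by simp
  rw [← add_sum_erase _ _ hconst, degree_star_of_last_eq_center (w := fun _ => Sum.inl 0) rfl,
    if_pos rfl,
    sum_congr rfl fun w hw => by
      rw [degree_star_of_last_eq_center (mem_filter.mp (mem_of_mem_erase hw)).2,
        if_neg (ne_of_mem_erase hw)],
    sum_const, card_erase_of_mem hconst, card_filter_last_eq, Fintype.card_sum, Fintype.card_fin,
    Fintype.card_fin, smul_eq_mul]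
  have : 1 ≤ (1 + r) ^ n := Nat.one_le_pow _ _ (by omega)
  obtain ⟨N, hN⟩ := Nat.exists_eq_add_of_le this
  rw [add_comm r 1, hN, add_tsub_cancel_left]
  ring

theorem card_hasInnerNeighbor_star :
    #{w : Fin (n + 1) → Fin 1 ⊕ Fin r | w (Fin.last n) ≠ Sum.inl 0 ∧
      HasInnerNeighbor (starGraph r) w} + 1 = (r + 1) ^ n := by
  have hleaf : ∑ w : Fin (n + 1) → Fin 1 ⊕ Fin r with w (Fin.last n) ≠ Sum.inl 0,
      (sierpinskiGraph (starGraph r) (n + 1)).degree w =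
        #{w : Fin (n + 1) → Fin 1 ⊕ Fin r | w (Fin.last n) ≠ Sum.inl 0} +
        #{w : Fin (n + 1) → Fin 1 ⊕ Fin r | w (Fin.last n) ≠ Sum.inl 0 ∧
          HasInnerNeighbor (starGraph r) w} := by
    rw [sum_congr rfl fun w hw => degree_star_of_last_ne_center (mem_filter.mp hw).2,
      sum_add_distrib, sum_boole, filter_filter]
    simp
  have hcard := card_filter_last_ne_add (n := n) (Sum.inl 0 : Fin 1 ⊕ Fin r)
  simp only [Fintype.card_sum, Fintype.card_fin] at hcard
  have handshake :=
    SimpleGraph.isBipartiteWith_sum_degrees_eq (isBipartiteWith_star (r := r) (n := n))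
  have hcenter := sum_degree_last_eq_center_star (r := r) (n := n)
  rw [add_comm 1 r, pow_succ] at hcard
  omega

theorem sum_neighborFinset_rpow_star {w : Fin (n + 2) → Fin 1 ⊕ Fin r}
    (hw : w (Fin.last (n + 1)) ≠ Sum.inl 0) (α : ℝ) :
    ∑ z ∈ (sierpinskiGraph (starGraph r) (n + 2)).neighborFinset w,
        (((sierpinskiGraph (starGraph r) (n + 2)).degree w : ℝ) *
          (sierpinskiGraph (starGraph r) (n + 2)).degree z) ^ α =
      ((r : ℝ) + 1) ^ α +
        (if HasInnerNeighbor (starGraph r) w then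
          2 * (2 * ((r : ℝ) + 1)) ^ α - ((r : ℝ) + 1) ^ α else 0) +
        (if Function.update w (Fin.last (n + 1)) (Sum.inl 0) = (fun _ => Sum.inl 0) then
          (2 * (r : ℝ)) ^ α - (2 * ((r : ℝ) + 1)) ^ α else 0) := by
  rw [sum_neighborFinset_star hw (fun d => (((sierpinskiGraph _ _).degree w : ℝ) * d) ^ α),
    degree_star_of_last_ne_center hw, degree_star_of_last_eq_center (Function.update_self ..)]
  by_cases hc : Function.update w (Fin.last (n + 1)) (Sum.inl 0) = fun _ => Sum.inl 0
  · simp only [hc, hasInnerNeighbor_star_of_update_last_eq_const hw hc]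
    norm_num
    ring
  · by_cases hi : HasInnerNeighbor (starGraph r) w
    · simp only [hc, hi]
      norm_num
      ring
    · simp only [hc, hi]
      norm_num

theorem randic_star_eq_card (α : ℝ) :
    randic (sierpinskiGraph (starGraph r) (n + 2)) α =
      #{w : Fin (n + 2) → Fin 1 ⊕ Fin r | w (Fin.last (n + 1)) ≠ Sum.inl 0} *
          ((r : ℝ) + 1) ^ α +
        #{w : Fin (n + 2) → Fin 1 ⊕ Fin r | w (Fin.last (n + 1)) ≠ Sum.inl 0 ∧
            HasInnerNeighbor (starGraph r) w} *
          (2 * (2 * ((r : ℝ) + 1)) ^ α - ((r : ℝ) + 1) ^ α) +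
        #{w : Fin (n + 2) → Fin 1 ⊕ Fin r | w (Fin.last (n + 1)) ≠ Sum.inl 0 ∧
            Function.update w (Fin.last (n + 1)) (Sum.inl 0) = fun _ => Sum.inl 0} *
          ((2 * (r : ℝ)) ^ α - (2 * ((r : ℝ) + 1)) ^ α) := by
  rw [SimpleGraph.randic_eq_sum_of_isBipartiteWith isBipartiteWith_star,
    sum_congr rfl fun w hw => sum_neighborFinset_rpow_star (mem_filter.mp hw).2 α,
    sum_add_distrib, sum_add_distrib, ← sum_filter, ← sum_filter, filter_filter, filter_filter]
  simp only [sum_const, nsmul_eq_mul]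

end sierpinskiGraph

theorem randic_sierpinski_star {r t : ℕ} (hr : 2 ≤ r) (ht : 2 ≤ t) (α : ℝ) :
    randic (sierpinskiGraph (completeBipartiteGraph (Fin 1) (Fin r)) t) α =
      ((r : ℝ) + 1) ^ α * (((r : ℝ) + 1) ^ (t - 1) * ((r : ℝ) - 1) + 1) +
        (2 : ℝ) ^ α * (r : ℝ) ^ (α + 1) +
        (2 * ((r : ℝ) + 1)) ^ α * (2 * ((r : ℝ) + 1) ^ (t - 1) - (r : ℝ) - 2) := by
  obtain ⟨n, rfl⟩ : ∃ n, t = n + 2 := ⟨t - 2, by omega⟩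
  have hleaves :
      (#{w : Fin (n + 2) → Fin 1 ⊕ Fin r | w (Fin.last (n + 1)) ≠ Sum.inl 0} : ℝ) =
        r * ((r : ℝ) + 1) ^ (n + 1) := by
    have := card_filter_last_ne_add (n := n + 1) (Sum.inl 0 : Fin 1 ⊕ Fin r)
    simp only [Fintype.card_sum, Fintype.card_fin] at this
    rw [← Nat.cast_inj (R := ℝ)] at this
    push_cast at this
    linear_combination this
  have hinner := sierpinskiGraph.card_hasInnerNeighbor_star (r := r) (n := n + 1)
  have hcorner := card_filter_update_last_eq_const (n := n + 1) (Sum.inl 0 : Fin 1 ⊕ Fin r)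
  simp only [Fintype.card_sum, Fintype.card_fin, add_tsub_cancel_left] at hcorner
  have hrpow : (2 * (r : ℝ)) ^ α * r = (2 : ℝ) ^ α * (r : ℝ) ^ (α + 1) := by
    rw [Real.mul_rpow (by norm_num) (by positivity), Real.rpow_add_one (by positivity)]
    ring
  rw [sierpinskiGraph.randic_star_eq_card, hleaves, hcorner, show n + 2 - 1 = n + 1 by omega]
  rw [← Nat.cast_inj (R := ℝ)] at hinner
  push_cast at hinner
  linear_combination (2 * (2 * ((r : ℝ) + 1)) ^ α - ((r : ℝ) + 1) ^ α) * hinner + hrpow
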